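/- arXiv:2508.03778 — 2 statements merged into one kernel-verified Lean document; each statement's English description precedes it below -/
import Mathlib

section
/- Let H be a balanced bipartite graph with parts X and Y, |X| = |Y| = n ≥ 16, with minimum degree δ(H) ≥ 2 and e(H) > n² − 3n, which is closed in the sense that every pair of non-adjacent vertices u ∈ X and v ∈ Y satisfies d_H(u) + d_H(v) ≤ n. Let s = |{u ∈ X : d_H(u) > n/2}| and t = |{v ∈ Y : d_H(v) > n/2}|. Then s, t ≥ n − 3 and s, t ≠ n − 1; that is, s, t ∈ {n−3, n−2, n}. -/
/-!
Closedness makes low-degree vertices expensive. If `u ∈ X` has degree `k ≤ n / 2`, its `n - k`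
non-neighbours in `Y` have degree at most `n - k`, so counting edges from `Y` gives
`e(H) ≤ k n + (n - k)² = n² - k (n - k)`, which is at most `n² - 3n` once `4 ≤ k ≤ n / 2` and
`n ≥ 16`. Hence low vertices have degree at most `3`, and four of them would already force
`e(H) ≤ (n - 4) n + 12 ≤ n² - 3n`. If exactly one vertex `u ∈ X` were low, closedness would make
every high vertex of `Y` adjacent to the `n - 1` high vertices of `X`, and then (as `d(u) ≥ 2`)
to `u` too, so `d(u) ≥ t ≥ n - 3 > n / 2`.
-/

open SimpleGraph

/-- The number of connected components of `G - S`. -/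
noncomputable def numComp {V : Type*} (G : SimpleGraph V) (S : Set V) : ℕ :=
  Nat.card (SimpleGraph.ConnectedComponent (SimpleGraph.induce Sᶜ G))

/-- `X, Y` form a bipartition of the graph `G`. -/
def IsBipartition {V : Type*} (G : SimpleGraph V) (X Y : Set V) : Prop :=
  X ∪ Y = Set.univ ∧ Disjoint X Y ∧
    ∀ ⦃u v⦄, G.Adj u v → (u ∈ X ∧ v ∈ Y) ∨ (u ∈ Y ∧ v ∈ X)

/-- The bipartite toughness of `G` (with parts `X`, `Y`) is at least `1`:
`c(G - S) ≤ |S|` for every proper subset `S ⊂ X` (or `S ⊂ Y`) with `c(G - S) > 1`. -/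
def BTough1 {V : Type*} (G : SimpleGraph V) (X Y : Set V) : Prop :=
  ∀ S : Set V, (S ⊂ X ∨ S ⊂ Y) → 1 < numComp G S → numComp G S ≤ S.ncard

/-- The toughness of a (non-complete) graph `G`. -/
noncomputable def toughness {V : Type*} (G : SimpleGraph V) : ℝ :=
  sInf {x : ℝ | ∃ S : Set V, 1 < numComp G S ∧ x = (S.ncard : ℝ) / (numComp G S : ℝ)}

/-- The spectral radius of `G`: the largest eigenvalue of its adjacency matrix. -/
noncomputable def specRad {V : Type*} [Fintype V] (G : SimpleGraph V) : ℝ :=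
  letI := Classical.decRel G.Adj
  sSup {μ : ℝ | Module.End.HasEigenvalue (Matrix.mulVecLin (G.adjMatrix ℝ)) μ}

/-- `G` has a 2-factor: a spanning subgraph in which every vertex has degree 2. -/
def Has2Factor {V : Type*} (G : SimpleGraph V) : Prop :=
  ∃ F : SimpleGraph V, F ≤ G ∧ ∀ v, (F.neighborSet v).ncard = 2

/-- The graph `G_{n,n}`: parts `X = {u_1,…,u_n}` (left) and `Y = {v_1,…,v_n}` (right);
`u_i ~ v_j` for all `i` and all `j ≥ 4`; moreover `v_1, v_2, v_3` are joined to `u_1`,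
and `v_i` is joined to `u_{i+1}` for `1 ≤ i ≤ 3` (indices here are 0-based). -/
def Gnn (n : ℕ) : SimpleGraph (Fin n ⊕ Fin n) :=
  SimpleGraph.fromRel fun a b =>
    match a, b with
    | Sum.inl i, Sum.inr j =>
        3 ≤ (j : ℕ) ∨ ((j : ℕ) < 3 ∧ ((i : ℕ) = 0 ∨ (i : ℕ) = (j : ℕ) + 1))
    | _, _ => False

/-- The graph `M_n`: the complete graph on `{v_1,…,v_{n-3}}` (the vertices of index `< n-3`),
together with three vertices `u_1, u_2, u_3` (the vertices of index `≥ n-3`), each joined to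
`v_1` (index `0`), and `u_i` joined to `v_{i+1}` for `1 ≤ i ≤ 3`. -/
def Mn (n : ℕ) : SimpleGraph (Fin n) :=
  SimpleGraph.fromRel fun a b =>
    ((a : ℕ) < n - 3 ∧ (b : ℕ) < n - 3) ∨
      (n - 3 ≤ (a : ℕ) ∧ ((b : ℕ) = 0 ∨ (b : ℕ) = (a : ℕ) - (n - 3) + 1))

open Finset

namespace SimpleGraph

variable {V : Type*} [Fintype V] {G : SimpleGraph V} [DecidableRel G.Adj]

lemma ncard_neighborSet_eq_degree (v : V) : (G.neighborSet v).ncard = G.degree v := by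
  rw [Set.ncard_eq_toFinset_card', ← neighborFinset_def, card_neighborFinset_eq_degree]

lemma ncard_edgeSet_eq_card_edgeFinset : G.edgeSet.ncard = #G.edgeFinset := by
  rw [← coe_edgeFinset, Set.ncard_coe_finset]

lemma ncard_sep_half_lt_ncard_neighborSet (s : Finset V) (n : ℕ) :
    {u ∈ (s : Set V) | (n : ℝ) / 2 < ((G.neighborSet u).ncard : ℝ)}.ncard
      = #{u ∈ s | n < 2 * G.degree u} := by
  rw [← Set.ncard_coe_finset, coe_filter]
  congr 1
  ext u
  rw [Set.mem_ofPred_eq, Set.mem_ofPred_eq, mem_coe, ncard_neighborSet_eq_degree,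
    div_lt_iff₀ two_pos]
  norm_cast
  rw [mul_comm]

def IsBipClosed (G : SimpleGraph V) [DecidableRel G.Adj] (s t : Finset V) (n : ℕ) : Prop :=
  ∀ u ∈ s, ∀ v ∈ t, ¬ G.Adj u v → G.degree u + G.degree v ≤ n

variable {s t : Finset V} {n : ℕ}

lemma IsBipClosed.symm (h : G.IsBipClosed s t n) : G.IsBipClosed t s n :=
  fun v hv u hu huv => add_comm (G.degree u) _ ▸ h u hu v hv fun h => huv h.symm

lemma IsBipClosed.adj_of_high (hc : G.IsBipClosed s t n) {u v : V} (hu : u ∈ s) (hv : v ∈ t)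
    (hu' : n < 2 * G.degree u) (hv' : n < 2 * G.degree v) : G.Adj u v := by
  by_contra huv
  have := hc u hu v hv huv
  omega

lemma IsBipClosed.card_edgeFinset_le (hB : G.IsBipartiteWith s t) (hc : G.IsBipClosed s t n)
    (hs : #s = n) (ht : #t = n) {u : V} (hu : u ∈ s) :
    #G.edgeFinset ≤ G.degree u * n + (n - G.degree u) * (n - G.degree u) := by
  classical
  have hN : G.neighborFinset u ⊆ t := isBipartiteWith_neighborFinset_subset hB hu
  have hnbr : ∑ v ∈ G.neighborFinset u, G.degree v ≤ G.degree u * n := by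
    have := sum_le_card_nsmul _ _ n fun v hv => hs ▸ isBipartiteWith_degree_le' hB (hN hv)
    rwa [card_neighborFinset_eq_degree, smul_eq_mul] at this
  have hnon : ∑ v ∈ t \ G.neighborFinset u, G.degree v ≤ (n - G.degree u) * (n - G.degree u) := by
    have hcard : #(t \ G.neighborFinset u) = n - G.degree u := by
      rw [card_sdiff_of_subset hN, ht, card_neighborFinset_eq_degree]
    have hbound : ∀ v ∈ t \ G.neighborFinset u, G.degree v ≤ n - G.degree u := fun v hv => by
      rw [mem_sdiff, mem_neighborFinset] at hv
      have := hc u hu v hv.1 hv.2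
      omega
    have := sum_le_card_nsmul _ _ _ hbound
    rwa [hcard, smul_eq_mul] at this
  rw [← isBipartiteWith_sum_degrees_eq_card_edges' hB, ← sum_sdiff hN]
  omega

lemma IsBipClosed.degree_le_three (hB : G.IsBipartiteWith s t) (hc : G.IsBipClosed s t n)
    (hs : #s = n) (ht : #t = n) (hn : 16 ≤ n) (he : n ^ 2 < #G.edgeFinset + 3 * n) {u : V}
    (hu : u ∈ s) (hlow : 2 * G.degree u ≤ n) : G.degree u ≤ 3 := by
  have hE := hc.card_edgeFinset_le hB hs ht hu
  obtain ⟨m, rfl⟩ : ∃ m, n = G.degree u + m := ⟨n - G.degree u, by omega⟩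
  rw [Nat.add_sub_cancel_left] at hE
  by_contra! h4
  nlinarith

lemma IsBipClosed.sub_three_le_card_high (hB : G.IsBipartiteWith s t) (hc : G.IsBipClosed s t n)
    (hs : #s = n) (ht : #t = n) (hn : 16 ≤ n) (he : n ^ 2 < #G.edgeFinset + 3 * n) :
    n - 3 ≤ #{u ∈ s | n < 2 * G.degree u} := by
  set high := #{u ∈ s | n < 2 * G.degree u}
  set low := #{u ∈ s | ¬ n < 2 * G.degree u}
  have hsplit : high + low = n := hs ▸ card_filter_add_card_filter_not _
  have hhigh : ∑ u ∈ s with n < 2 * G.degree u, G.degree u ≤ high * n := by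
    have hbound : ∀ u ∈ {u ∈ s | n < 2 * G.degree u}, G.degree u ≤ n :=
      fun u hu => ht ▸ isBipartiteWith_degree_le hB (mem_filter.mp hu).1
    have := sum_le_card_nsmul _ _ _ hbound
    rwa [smul_eq_mul] at this
  have hlow : ∑ u ∈ s with ¬ n < 2 * G.degree u, G.degree u ≤ low * 3 := by
    have hbound : ∀ u ∈ {u ∈ s | ¬ n < 2 * G.degree u}, G.degree u ≤ 3 := fun u hu => by
      rw [mem_filter] at hu
      exact hc.degree_le_three hB hs ht hn he hu.1 (by omega)
    have := sum_le_card_nsmul _ _ _ hbound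
    rwa [smul_eq_mul] at this
  have hE : #G.edgeFinset ≤ high * n + low * 3 := by
    rw [← isBipartiteWith_sum_degrees_eq_card_edges hB, ← sum_filter_add_sum_filter_not s
      fun u => n < 2 * G.degree u]
    omega
  by_contra! hlt
  obtain ⟨k, hk⟩ : ∃ k, low = k + 4 := ⟨low - 4, by omega⟩
  obtain ⟨m, rfl⟩ : ∃ m, n = m + 16 := ⟨n - 16, by omega⟩
  rw [hk] at hE
  nlinarith

lemma IsBipClosed.card_high_le_degree (hc : G.IsBipClosed s t n) {v : V} (hv : v ∈ t)
    (hv' : n < 2 * G.degree v) : #{u ∈ s | n < 2 * G.degree u} ≤ G.degree v := by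
  rw [← card_neighborFinset_eq_degree]
  refine card_le_card fun u hu => ?_
  rw [mem_filter] at hu
  exact (G.mem_neighborFinset v u).mpr (hc.adj_of_high hu.1 hv hu.2 hv').symm

lemma IsBipClosed.card_high_ne_sub_one (hc : G.IsBipClosed s t n) (hs : #s = n) (hn : 7 ≤ n)
    (hδ : ∀ u ∈ s, 2 ≤ G.degree u) (ht : n - 3 ≤ #{v ∈ t | n < 2 * G.degree v}) :
    #{u ∈ s | n < 2 * G.degree u} ≠ n - 1 := by
  intro hs'
  obtain ⟨u, hu, hlow⟩ : ∃ u ∈ s, ¬ n < 2 * G.degree u := by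
    by_contra! hall
    rw [filter_true_of_mem hall] at hs'
    omega
  have hsub : {v ∈ t | n < 2 * G.degree v} ⊆ G.neighborFinset u := fun v hv => by
    rw [mem_filter] at hv
    rw [mem_neighborFinset]
    by_contra huv
    have hsum := hc u hu v hv.1 huv
    have hv_deg := hc.card_high_le_degree hv.1 hv.2
    have hu_deg := hδ u hu
    omega
  have := card_le_card hsub
  rw [card_neighborFinset_eq_degree] at this
  omega

end SimpleGraph

open SimpleGraph

/-- For a closed balanced bipartite graph `H` with parts of size `n ≥ 16`,
`δ(H) ≥ 2` and `e(H) > n² - 3n`, the numbers `s`, `t` of vertices of degree `> n/2` in the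
two parts satisfy `s, t ≥ n - 3` and `s, t ≠ n - 1`. -/
theorem stmt12 {V : Type*} [Fintype V] (n : ℕ) (hn : 16 ≤ n)
    (H : SimpleGraph V) (X Y : Set V)
    (hbip : IsBipartition H X Y) (hX : X.ncard = n) (hY : Y.ncard = n)
    (hdelta : ∀ w : V, 2 ≤ (H.neighborSet w).ncard)
    (he : ((n : ℝ)^2 - 3 * n) < (H.edgeSet.ncard : ℝ))
    (hclosed : ∀ u ∈ X, ∀ v ∈ Y, ¬ H.Adj u v →
      (H.neighborSet u).ncard + (H.neighborSet v).ncard ≤ n)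
    (s t : ℕ)
    (hs : s = ({u ∈ X | (n : ℝ) / 2 < ((H.neighborSet u).ncard : ℝ)}).ncard)
    (ht : t = ({v ∈ Y | (n : ℝ) / 2 < ((H.neighborSet v).ncard : ℝ)}).ncard) :
    n - 3 ≤ s ∧ n - 3 ≤ t ∧ s ≠ n - 1 ∧ t ≠ n - 1 := by
  classical
  lift X to Finset V using X.toFinite
  lift Y to Finset V using Y.toFinite
  rw [Set.ncard_coe_finset] at hX hY
  have hB : H.IsBipartiteWith X Y := ⟨hbip.2.1, hbip.2.2⟩
  have hc : H.IsBipClosed X Y n := fun u hu v hv huv => by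
    simpa only [ncard_neighborSet_eq_degree] using hclosed u hu v hv huv
  simp only [ncard_neighborSet_eq_degree] at hdelta
  have he' : n ^ 2 < #H.edgeFinset + 3 * n := by
    rw [ncard_edgeSet_eq_card_edgeFinset] at he
    exact_mod_cast sub_lt_iff_lt_add.mp he
  rw [ncard_sep_half_lt_ncard_neighborSet] at hs ht
  subst hs ht
  have hX_high := hc.sub_three_le_card_high hB hX hY hn he'
  have hY_high := hc.symm.sub_three_le_card_high hB.symm hY hX hn he'
  exact ⟨hX_high, hY_high, hc.card_high_ne_sub_one hX (by omega) (fun u _ => hdelta u) hY_high,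
    hc.symm.card_high_ne_sub_one hY (by omega) (fun v _ => hdelta v) hX_high⟩
end

section
/- Let n ≥ 16 and let H be a balanced bipartite graph with parts X = {u_1,…,u_n} and Y = {v_1,…,v_n} such that u_i is adjacent to v_j for all 1 ≤ i ≤ n and 4 ≤ j ≤ n, and such that d_H(v_i) = 2 for i = 1, 2, 3. If the bipartite toughness of H satisfies t^B(H) ≥ 1 and H contains no Hamilton cycle, then there is a vertex u ∈ X adjacent to all three of v_1, v_2, v_3, and the second neighbors of v_1, v_2, v_3 (their neighbors other than u) are pairwise distinct; consequently H is isomorphic to G_{n,n}. -/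
open SimpleGraph

theorem SimpleGraph.isHamiltonian_of_adj_add_one {V : Type*} [Fintype V] [DecidableEq V]
    {G : SimpleGraph V} {m : ℕ} [NeZero m] (hm : 3 ≤ m) (e : Fin m ≃ V)
    (h : ∀ k, G.Adj (e k) (e (k + 1))) :
    G.IsHamiltonian := by
  obtain ⟨m, rfl⟩ : ∃ k, m = k + 2 := ⟨m - 2, by omega⟩
  let hom : cycleGraph (m + 2) →g G := ⟨e, fun {u v} huv => by
    rcases cycleGraph_adj.1 huv with huv | huv <;> rw [sub_eq_iff_eq_add'] at huv <;> subst huv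
    exacts [(h v).symm, h u]⟩
  obtain ⟨v, p, hp, hlen⟩ := (cycleGraph_isContained_iff (by omega)).1 ⟨hom.toCopy e.injective⟩
  exact fun _ => ⟨v, p, Walk.isHamiltonianCycle_iff_isCycle_and_length_eq.2
    ⟨hp, by rw [hlen, Fintype.card_congr e.symm, Fintype.card_fin]⟩⟩

def zigzag {α β : Type*} {n : ℕ} (c : Fin n → α) (d : Fin n → β) (k : Fin (2 * n)) : α ⊕ β :=
  if k.val % 2 = 0 then .inl (c ⟨k / 2, by omega⟩) else .inr (d ⟨k / 2, by omega⟩)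

theorem zigzag_injective {α β : Type*} {n : ℕ} {c : Fin n → α} {d : Fin n → β}
    (hc : c.Injective) (hd : d.Injective) : (zigzag c d).Injective := by
  intro a b hab
  unfold zigzag at hab
  split_ifs at hab with ha hb hb
  · exact Fin.ext (by have := Fin.mk.inj_iff.1 (hc (Sum.inl_injective hab)); omega)
  · exact Fin.ext (by have := Fin.mk.inj_iff.1 (hd (Sum.inr_injective hab)); omega)

theorem zigzag_two_mul {α β : Type*} {n : ℕ} (c : Fin n → α) (d : Fin n → β) (i : Fin n) :
    zigzag c d ⟨2 * i.val, by omega⟩ = .inl (c i) := by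
  simp [zigzag]

theorem zigzag_two_mul_add_one {α β : Type*} {n : ℕ} (c : Fin n → α) (d : Fin n → β)
    (i : Fin n) :
    zigzag c d ⟨2 * i.val + 1, by omega⟩ = .inr (d i) := by
  rw [zigzag, if_neg (by simp only; omega)]
  exact congrArg _ (congrArg d (Fin.ext (show (2 * i.val + 1) / 2 = i.val by omega)))

theorem isHamiltonian_of_zigzag {α β : Type*} [Fintype α] [Fintype β] [DecidableEq α]
    [DecidableEq β] {G : SimpleGraph (α ⊕ β)} {n : ℕ} [NeZero n] (hn : 2 ≤ n)
    (c : Fin n ≃ α) (d : Fin n ≃ β) (hcd : ∀ k, G.Adj (.inl (c k)) (.inr (d k)))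
    (hdc : ∀ k, G.Adj (.inr (d k)) (.inl (c (k + 1)))) :
    G.IsHamiltonian := by
  have hbij : (zigzag c d).Bijective := by
    rw [Fintype.bijective_iff_injective_and_card]
    refine ⟨zigzag_injective c.injective d.injective, ?_⟩
    rw [Fintype.card_sum, ← Fintype.card_congr c, ← Fintype.card_congr d, Fintype.card_fin,
      Fintype.card_fin, two_mul]
  refine isHamiltonian_of_adj_add_one (by omega) (Equiv.ofBijective _ hbij) fun k => ?_
  have h1 {m : ℕ} [NeZero m] (hm : 2 ≤ m) : (1 : Fin m).val = 1 := by
    rw [Fin.val_one', Nat.mod_eq_of_lt hm]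
  obtain ⟨i, rfl | rfl⟩ :
      ∃ i : Fin n, k = ⟨2 * i.val, by omega⟩ ∨ k = ⟨2 * i.val + 1, by omega⟩ :=
    ⟨⟨k / 2, by omega⟩, by simp only [Fin.ext_iff]; omega⟩
  · have hk : (⟨2 * i.val, by omega⟩ + 1 : Fin (2 * n)) = ⟨2 * i.val + 1, by omega⟩ := by
      ext; simp only [Fin.val_add, h1 (m := 2 * n) (by omega)]; exact Nat.mod_eq_of_lt (by omega)
    simpa only [Equiv.ofBijective_apply, hk, zigzag_two_mul, zigzag_two_mul_add_one] using hcd i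
  · have hk : (⟨2 * i.val + 1, by omega⟩ + 1 : Fin (2 * n)) =
        ⟨2 * ↑(i + 1), by have := (i + 1).isLt; omega⟩ := by
      ext
      simp only [Fin.val_add, h1 (m := 2 * n) (by omega), h1 hn]
      rcases Nat.lt_or_ge (i.val + 1) n with hi | hi
      · rw [Nat.mod_eq_of_lt hi, Nat.mod_eq_of_lt (by omega)]; omega
      · rw [show i.val + 1 = n by omega, show 2 * i.val + 1 + 1 = 2 * n by omega, Nat.mod_self,
          Nat.mod_self]
    simpa only [Equiv.ofBijective_apply, hk, zigzag_two_mul, zigzag_two_mul_add_one] using hdc i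

theorem eq_of_reachable_induce_compl {V : Type*} {G : SimpleGraph V} {S : Set V} {v w : ↥Sᶜ}
    (hv : G.neighborSet v ⊆ S) (h : (G.induce Sᶜ).Reachable v w) : v = w := by
  obtain ⟨p⟩ := h
  cases p with
  | nil => rfl
  | @cons _ u _ h _ => exact (u.2 (hv h)).elim

theorem card_add_one_le_numComp {V : Type*} [Finite V] {G : SimpleGraph V} {S : Set V}
    {T : Finset V} (hT : ∀ v ∈ T, v ∉ S ∧ G.neighborSet v ⊆ S) {z : V} (hzS : z ∉ S)
    (hzT : z ∉ T) : T.card + 1 ≤ numComp G S := by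
  classical
  have hS : ∀ v ∈ insert z T, v ∈ Sᶜ := by
    intro v hv
    rcases Finset.mem_insert.1 hv with rfl | hv
    exacts [hzS, (hT v hv).1]
  let f : ↥(insert z T) → (G.induce Sᶜ).ConnectedComponent :=
    fun v => (G.induce Sᶜ).connectedComponentMk ⟨v, hS v v.2⟩
  have hf : f.Injective := by
    rintro ⟨a, ha⟩ ⟨b, hb⟩ hab
    have hreach := SimpleGraph.ConnectedComponent.exact hab
    rcases Finset.mem_insert.1 ha with rfl | ha
    · rcases Finset.mem_insert.1 hb with rfl | hb
      · rfl
      · exact Subtype.ext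
          (Subtype.mk.inj (eq_of_reachable_induce_compl (hT b hb).2 hreach.symm)).symm
    · exact Subtype.ext (Subtype.mk.inj (eq_of_reachable_induce_compl (hT a ha).2 hreach))
  have := Nat.card_le_card_of_injective f hf
  rwa [Nat.card_eq_fintype_card, Fintype.card_coe, Finset.card_insert_of_notMem hzT] at this

open Classical in
noncomputable def leftNbrs {α β : Type*} [Fintype α] (H : SimpleGraph (α ⊕ β)) (j : β) :
    Finset α :=
  Finset.univ.filter fun i => H.Adj (.inl i) (.inr j)

@[simp]
theorem mem_leftNbrs {α β : Type*} [Fintype α] {H : SimpleGraph (α ⊕ β)} {i : α} {j : β} :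
    i ∈ leftNbrs H j ↔ H.Adj (.inl i) (.inr j) := by
  simp [leftNbrs]

theorem IsBipartition.not_adj_inl_inl {α β : Type*} {H : SimpleGraph (α ⊕ β)}
    (hbip : IsBipartition H (Set.range .inl) (Set.range .inr)) (a b : α) :
    ¬ H.Adj (.inl a) (.inl b) := fun h => by
  rcases hbip.2.2 h with ⟨-, _, h⟩ | ⟨⟨_, h⟩, -⟩ <;> exact nomatch h

theorem IsBipartition.not_adj_inr_inr {α β : Type*} {H : SimpleGraph (α ⊕ β)}
    (hbip : IsBipartition H (Set.range .inl) (Set.range .inr)) (a b : β) :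
    ¬ H.Adj (.inr a) (.inr b) := fun h => by
  rcases hbip.2.2 h with ⟨⟨_, h⟩, -⟩ | ⟨-, _, h⟩ <;> exact nomatch h

theorem IsBipartition.neighborSet_inr_eq {α β : Type*} [Fintype α] {H : SimpleGraph (α ⊕ β)}
    (hbip : IsBipartition H (Set.range .inl) (Set.range .inr)) (j : β) :
    H.neighborSet (.inr j) = Sum.inl '' (leftNbrs H j : Set α) := by
  ext (i | j')
  · simp [adj_comm]
  · simpa using hbip.not_adj_inr_inr j j'

theorem BTough1.card_lt_card_biUnion_leftNbrs {α β : Type*} [Fintype α] [DecidableEq α]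
    [Finite β] {H : SimpleGraph (α ⊕ β)} (htough : BTough1 H (Set.range .inl) (Set.range .inr))
    (hbip : IsBipartition H (Set.range .inl) (Set.range .inr)) {J : Finset β} (hJ : J.Nonempty)
    (hlt : (J.biUnion (leftNbrs H)).card < Fintype.card α) :
    J.card < (J.biUnion (leftNbrs H)).card := by
  set N := J.biUnion (leftNbrs H)
  obtain ⟨z, -, hz⟩ := Finset.exists_mem_notMem_of_card_lt_card hlt
  set S : Set (α ⊕ β) := Sum.inl '' N
  have hsep : ∀ v ∈ J.map .inr, v ∉ S ∧ H.neighborSet v ⊆ S := by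
    simp only [Finset.mem_map, Function.Embedding.inr_apply, forall_exists_index, and_imp]
    rintro _ j hj rfl
    refine ⟨by simp [S], ?_⟩
    rw [hbip.neighborSet_inr_eq]
    exact Set.image_mono (Finset.coe_subset.2 (Finset.subset_biUnion_of_mem _ hj))
  have hcard := card_add_one_le_numComp hsep (z := .inl z) (by simpa [S] using hz) (by simp)
  have hSX : S ⊂ Set.range .inl := (Set.ssubset_iff_of_subset (Set.image_subset_range _ _)).2
    ⟨.inl z, ⟨z, rfl⟩, by simpa [S] using hz⟩
  have hJcard : 1 ≤ J.card := hJ.card_pos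
  rw [Finset.card_map] at hcard
  have := htough S (Or.inl hSX) (by omega)
  rw [Set.ncard_image_of_injective _ Sum.inl_injective, Set.ncard_coe_finset] at this
  omega

def IsConsecutivePair {α : Type*} [DecidableEq α] (l : List α) (A : Finset α) : Prop :=
  ∃ (k : ℕ) (h : k + 1 < l.length), A = {l[k], l[k + 1]}

section ThreePairs

variable {α : Type*} [DecidableEq α] {A B C : Finset α}

theorem Finset.eq_pair_of_card_eq_two {x y : α} (hA : A.card = 2) (hx : x ∈ A) (hy : y ∈ A)
    (hxy : x ≠ y) : A = {x, y} :=
  (Finset.eq_of_subset_of_card_le (by simp [Finset.insert_subset_iff, hx, hy])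
    (by rw [hA, Finset.card_pair hxy])).symm

theorem Finset.exists_eq_pair_of_mem {x : α} (hA : A.card = 2) (hx : x ∈ A) :
    ∃ y, y ≠ x ∧ A = {x, y} := by
  obtain ⟨y, hy, hyx⟩ := A.exists_mem_ne (by omega) x
  exact ⟨y, hyx, eq_pair_of_card_eq_two hA hx hy hyx.symm⟩

theorem exists_nodup_of_meets_both (hA : A.card = 2) (hB : B.card = 2) (hC : C.card = 2)
    (hAC : Disjoint A C) {x y : α} (hxA : x ∈ A) (hxB : x ∈ B) (hyB : y ∈ B) (hyC : y ∈ C) :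
    ∃ l : List α, l.Nodup ∧ IsConsecutivePair l A ∧ IsConsecutivePair l B ∧
      IsConsecutivePair l C := by
  have hxy : x ≠ y := fun h => Finset.disjoint_left.1 hAC hxA (h ▸ hyC)
  obtain ⟨a, hax, rfl⟩ := Finset.exists_eq_pair_of_mem hA hxA
  obtain ⟨d, hdy, rfl⟩ := Finset.exists_eq_pair_of_mem hC hyC
  rw [Finset.eq_pair_of_card_eq_two hB hxB hyB hxy]
  simp only [Finset.disjoint_insert_left, Finset.disjoint_singleton_left, Finset.mem_insert,
    Finset.mem_singleton, not_or] at hAC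
  refine ⟨[a, x, y, d], ?_, ⟨0, by simp, Finset.pair_comm _ _⟩, ⟨1, by simp, rfl⟩,
    ⟨2, by simp, rfl⟩⟩
  simp_all [eq_comm]

theorem exists_nodup_of_meets_left (hA : A.card = 2) (hB : B.card = 2) (hC : C.card = 2)
    (hAC : Disjoint A C) (hBC : Disjoint B C) (hAB : 2 < (A ∪ B).card) {x : α} (hxA : x ∈ A)
    (hxB : x ∈ B) :
    ∃ l : List α, l.Nodup ∧ IsConsecutivePair l A ∧ IsConsecutivePair l B ∧
      IsConsecutivePair l C := by
  obtain ⟨a, hax, rfl⟩ := Finset.exists_eq_pair_of_mem hA hxA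
  obtain ⟨y, hyx, rfl⟩ := Finset.exists_eq_pair_of_mem hB hxB
  obtain ⟨c, d, hcd, rfl⟩ := Finset.card_eq_two.1 hC
  have hya : y ≠ a := by
    rintro rfl
    rw [Finset.union_self, hA] at hAB
    omega
  simp only [Finset.disjoint_insert_left, Finset.disjoint_singleton_left, Finset.mem_insert,
    Finset.mem_singleton, not_or] at hAC hBC
  refine ⟨[a, x, y, c, d], ?_, ⟨0, by simp, Finset.pair_comm _ _⟩, ⟨1, by simp, rfl⟩,
    ⟨3, by simp, rfl⟩⟩
  simp_all [eq_comm]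

theorem exists_nodup_of_pairwise_disjoint (hA : A.card = 2) (hB : B.card = 2) (hC : C.card = 2)
    (hAB : Disjoint A B) (hAC : Disjoint A C) (hBC : Disjoint B C) :
    ∃ l : List α, l.Nodup ∧ IsConsecutivePair l A ∧ IsConsecutivePair l B ∧
      IsConsecutivePair l C := by
  obtain ⟨a, b, hab, rfl⟩ := Finset.card_eq_two.1 hA
  obtain ⟨x, y, hxy, rfl⟩ := Finset.card_eq_two.1 hB
  obtain ⟨c, d, hcd, rfl⟩ := Finset.card_eq_two.1 hC
  simp only [Finset.disjoint_insert_left, Finset.disjoint_singleton_left, Finset.mem_insert,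
    Finset.mem_singleton, not_or] at hAB hAC hBC
  refine ⟨[a, b, x, y, c, d], ?_, ⟨0, by simp, rfl⟩, ⟨2, by simp, rfl⟩, ⟨4, by simp, rfl⟩⟩
  simp_all

theorem exists_nodup_of_disjoint (hA : A.card = 2) (hB : B.card = 2) (hC : C.card = 2)
    (hAC : Disjoint A C) (hAB : 2 < (A ∪ B).card) (hBC : 2 < (B ∪ C).card) :
    ∃ l : List α, l.Nodup ∧ IsConsecutivePair l A ∧ IsConsecutivePair l B ∧
      IsConsecutivePair l C := by
  by_cases hAB' : Disjoint A B <;> by_cases hBC' : Disjoint B C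
  · exact exists_nodup_of_pairwise_disjoint hA hB hC hAB' hAC hBC'
  · obtain ⟨y, hyB, hyC⟩ := Finset.not_disjoint_iff.1 hBC'
    obtain ⟨l, hl, hC', hB', hA'⟩ := exists_nodup_of_meets_left hC hB hA hAC.symm hAB'.symm
      (by rwa [Finset.union_comm]) hyC hyB
    exact ⟨l, hl, hA', hB', hC'⟩
  · obtain ⟨x, hxA, hxB⟩ := Finset.not_disjoint_iff.1 hAB'
    exact exists_nodup_of_meets_left hA hB hC hAC hBC' hAB hxA hxB
  · obtain ⟨x, hxA, hxB⟩ := Finset.not_disjoint_iff.1 hAB'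
    obtain ⟨y, hyB, hyC⟩ := Finset.not_disjoint_iff.1 hBC'
    exact exists_nodup_of_meets_both hA hB hC hAC hxA hxB hyB hyC

end ThreePairs

theorem exists_nodup_forall_isConsecutivePair {α : Type*} [DecidableEq α]
    (A : Fin 3 → Finset α) (hA : ∀ i, (A i).card = 2)
    (hHall : ∀ J : Finset (Fin 3), J.Nonempty → J.card < (J.biUnion A).card)
    (hcommon : ∀ x, ∃ i, x ∉ A i) :
    ∃ l : List α, l.Nodup ∧ ∀ i, IsConsecutivePair l (A i) := by
  have h2 (i j : Fin 3) (hij : i ≠ j) : 2 < (A i ∪ A j).card := by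
    simpa [Finset.card_pair hij] using hHall {i, j} (by simp)
  have h3 : 3 < (A 0 ∪ A 1 ∪ A 2).card := by
    simpa [Finset.union_assoc] using hHall {0, 1, 2} (by simp)
  by_cases h02 : Disjoint (A 0) (A 2)
  · obtain ⟨l, hl, h0, h1, h2⟩ := exists_nodup_of_disjoint (hA 0) (hA 1) (hA 2) h02
      (h2 0 1 (by decide)) (h2 1 2 (by decide))
    exact ⟨l, hl, fun i => by fin_cases i <;> assumption⟩
  by_cases h01 : Disjoint (A 0) (A 1)
  · obtain ⟨l, hl, h0, h2, h1⟩ := exists_nodup_of_disjoint (hA 0) (hA 2) (hA 1) h01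
      (h2 0 2 (by decide)) (h2 2 1 (by decide))
    exact ⟨l, hl, fun i => by fin_cases i <;> assumption⟩
  by_cases h12 : Disjoint (A 1) (A 2)
  · obtain ⟨l, hl, h1, h0, h2⟩ := exists_nodup_of_disjoint (hA 1) (hA 0) (hA 2) h12
      (h2 1 0 (by decide)) (h2 0 2 (by decide))
    exact ⟨l, hl, fun i => by fin_cases i <;> assumption⟩
  -- Pairwise meeting pairs without a common point form a triangle, with only three points.
  exfalso
  have hnot (x : α) (h0 : x ∈ A 0) (h1 : x ∈ A 1) (h2 : x ∈ A 2) : False := by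
    obtain ⟨i, hi⟩ := hcommon x
    fin_cases i <;> contradiction
  obtain ⟨s, hs0, hs1⟩ := Finset.not_disjoint_iff.1 h01
  obtain ⟨t, ht0, ht2⟩ := Finset.not_disjoint_iff.1 h02
  obtain ⟨r, hr1, hr2⟩ := Finset.not_disjoint_iff.1 h12
  have hst : s ≠ t := by rintro rfl; exact hnot s hs0 hs1 ht2
  have hsr : s ≠ r := by rintro rfl; exact hnot s hs0 hs1 hr2
  have htr : t ≠ r := by rintro rfl; exact hnot t ht0 hr1 ht2
  rw [Finset.eq_pair_of_card_eq_two (hA 0) hs0 ht0 hst,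
    Finset.eq_pair_of_card_eq_two (hA 1) hs1 hr1 hsr,
    Finset.eq_pair_of_card_eq_two (hA 2) ht2 hr2 htr] at h3
  have htri : ({s, t} ∪ {s, r} ∪ {t, r} : Finset α) = {s, t, r} := by ext; simp
  rw [htri] at h3
  exact absurd Finset.card_le_three h3.not_ge

theorem exists_perm_of_isConsecutivePair {n : ℕ} [NeZero n] {ι : Type*}
    {A : ι → Finset (Fin n)} (hA : A.Injective) {l : List (Fin n)} (hl : l.Nodup)
    (hcons : ∀ i, IsConsecutivePair l (A i)) :
    ∃ (c : Equiv.Perm (Fin n)) (g : ι → Fin n),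
      g.Injective ∧ ∀ i, A i = {c (g i), c (g i + 1)} := by
  have hlen : l.length ≤ n := by simpa using hl.length_le_card
  obtain ⟨c, hc⟩ := Equiv.Perm.exists_extending_pair (Fin.castLE hlen) l.get
    (Fin.castLE_injective hlen) (List.nodup_iff_injective_get.1 hl)
  choose k hk hAk using hcons
  let g (i : ι) : Fin n := ⟨k i, by have := hk i; omega⟩
  have hcg (i : ι) : c (g i) = l[k i]'(by have := hk i; omega) :=
    hc ⟨k i, by have := hk i; omega⟩
  have hcg1 (i : ι) : c (g i + 1) = l[k i + 1]'(hk i) := by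
    have h1 : g i + 1 = Fin.castLE hlen ⟨k i + 1, hk i⟩ := by
      have := hk i
      ext
      rw [Fin.val_add, Fin.val_one']
      show (k i + 1 % n) % n = k i + 1
      rw [Nat.add_mod_mod, Nat.mod_eq_of_lt (by omega)]
    rw [h1]; exact hc ⟨k i + 1, hk i⟩
  refine ⟨c, g, fun i j hij => hA ?_, fun i => by rw [hcg, hcg1, hAk]⟩
  have hkij : k i = k j := Fin.val_eq_of_eq hij
  rw [hAk, hAk]
  simp only [hkij]

theorem isHamiltonian_of_leftNbrs_eq_pair {n : ℕ} [NeZero n] (hn : 3 ≤ n)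
    {H : SimpleGraph (Fin n ⊕ Fin n)}
    (hcomp : ∀ i j : Fin n, 3 ≤ (j : ℕ) → H.Adj (.inl i) (.inr j))
    (c : Equiv.Perm (Fin n)) {g : Fin 3 → Fin n} (hg : g.Injective)
    (hgap : ∀ k, leftNbrs H (Fin.castLE hn k) = {c (g k), c (g k + 1)}) :
    H.IsHamiltonian := by
  obtain ⟨τ, hτ⟩ :=
    Equiv.Perm.exists_extending_pair g (Fin.castLE hn) hg (Fin.castLE_injective hn)
  have hadj (k : Fin n) :
      H.Adj (.inl (c k)) (.inr (τ k)) ∧ H.Adj (.inl (c (k + 1))) (.inr (τ k)) := by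
    by_cases hk : (τ k : ℕ) < 3
    · obtain ⟨m, rfl⟩ : ∃ m, g m = k := ⟨⟨τ k, hk⟩, τ.injective (by rw [hτ]; rfl)⟩
      rw [hτ, ← mem_leftNbrs, ← mem_leftNbrs, hgap]
      simp
    · exact ⟨hcomp _ _ (by omega), hcomp _ _ (by omega)⟩
  exact isHamiltonian_of_zigzag (by omega) c τ (fun k => (hadj k).1) (fun k => (hadj k).2.symm)

theorem gnn_adj_inl_inr {n : ℕ} (i j : Fin n) :
    (Gnn n).Adj (.inl i) (.inr j) ↔
      3 ≤ (j : ℕ) ∨ (j : ℕ) < 3 ∧ ((i : ℕ) = 0 ∨ (i : ℕ) = j + 1) := by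
  simp [Gnn]

theorem nonempty_iso_gnn {n : ℕ} (hn : 4 ≤ n) {H : SimpleGraph (Fin n ⊕ Fin n)}
    (hbip : IsBipartition H (Set.range .inl) (Set.range .inr))
    (hcomp : ∀ i j : Fin n, 3 ≤ (j : ℕ) → H.Adj (.inl i) (.inr j))
    {u : Fin n} {w : Fin 3 → Fin n} (hw : w.Injective) (hwu : ∀ k, w k ≠ u)
    (hN : ∀ (j : Fin n) (hj : (j : ℕ) < 3), leftNbrs H j = {u, w ⟨j, hj⟩}) :
    Nonempty (H ≃g Gnn n) := by
  obtain ⟨σ, hσ⟩ := Equiv.Perm.exists_extending_pair (Fin.castLE hn)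
    (Fin.cons u w : Fin 4 → Fin n) (Fin.castLE_injective hn)
    (Fin.cons_injective_iff.2 ⟨fun ⟨k, hk⟩ => hwu k hk, hw⟩)
  have key (i j : Fin n) : H.Adj (.inl (σ i)) (.inr j) ↔ (Gnn n).Adj (.inl i) (.inr j) := by
    rw [gnn_adj_inl_inr]
    by_cases hj : 3 ≤ (j : ℕ)
    · simp [hj, hcomp]
    have hu : u = σ ⟨0, by omega⟩ := (hσ 0).symm
    have hwj : w ⟨j, by omega⟩ = σ ⟨j + 1, by omega⟩ := (hσ (Fin.succ ⟨j, by omega⟩)).symm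
    rw [← mem_leftNbrs, hN j (by omega), Finset.mem_insert, Finset.mem_singleton, hu, hwj,
      σ.injective.eq_iff, σ.injective.eq_iff, Fin.ext_iff, Fin.ext_iff]
    simp only [hj, false_or]
    exact ⟨fun h => ⟨by omega, h⟩, And.right⟩
  refine ⟨⟨Equiv.sumCongr σ.symm (Equiv.refl _), @fun a b => ?_⟩⟩
  rcases a with i | j <;> rcases b with i' | j'
  · simpa [Gnn] using hbip.not_adj_inl_inl i i'
  · simpa using (key (σ.symm i) j').symm
  · simpa [adj_comm] using (key (σ.symm i') j).symm
  · simpa [Gnn] using hbip.not_adj_inr_inr j j'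

/-- Let `n ≥ 16` and let `H` be balanced bipartite containing all edges
`u_i v_j` for `j ≥ 4`, with `d(vᵢ) = 2` for `i = 1, 2, 3`. If `H` has bipartite toughness at
least `1` and no Hamilton cycle, then some `u ∈ X` is adjacent to all of `v₁, v₂, v₃`, their
second neighbors are pairwise distinct, and consequently `H ≅ G_{n,n}`. (Indices 0-based.) -/
theorem stmt16 (n : ℕ) (hn : 16 ≤ n) (H : SimpleGraph (Fin n ⊕ Fin n))
    (hbip : IsBipartition H (Set.range Sum.inl) (Set.range Sum.inr))
    (hcomp : ∀ i j : Fin n, 3 ≤ (j : ℕ) → H.Adj (Sum.inl i) (Sum.inr j))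
    (hdeg : ∀ j : Fin n, (j : ℕ) < 3 → (H.neighborSet (Sum.inr j)).ncard = 2)
    (htough : BTough1 H (Set.range Sum.inl) (Set.range Sum.inr))
    (hham : ¬ H.IsHamiltonian) :
    (∃ (u : Fin n) (w : Fin 3 → Fin n), Function.Injective w ∧ (∀ k : Fin 3, w k ≠ u) ∧
      ∀ (j : Fin n) (hj : (j : ℕ) < 3),
        H.neighborSet (Sum.inr j) = {Sum.inl u, Sum.inl (w ⟨(j : ℕ), hj⟩)}) ∧
    Nonempty (H ≃g Gnn n) := by
  have : NeZero n := ⟨by omega⟩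
  have h3 : 3 ≤ n := by omega
  set A : Fin 3 → Finset (Fin n) := fun k => leftNbrs H (Fin.castLE h3 k)
  have hA (k : Fin 3) : (A k).card = 2 := by
    rw [← hdeg (Fin.castLE h3 k) k.isLt, hbip.neighborSet_inr_eq,
      Set.ncard_image_of_injective _ Sum.inl_injective, Set.ncard_coe_finset]
  have hHall (J : Finset (Fin 3)) (hJ : J.Nonempty) : J.card < (J.biUnion A).card := by
    have hle : (J.biUnion A).card ≤ 6 :=
      (Finset.card_biUnion_le_card_mul J A 2 fun k _ => (hA k).le).trans
        (by have := J.card_le_univ; rw [Fintype.card_fin] at this; omega)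
    have := htough.card_lt_card_biUnion_leftNbrs hbip (J := J.map (Fin.castLEEmb h3)) hJ.map
    rw [Finset.card_map, Finset.map_eq_image, Finset.image_biUnion, Fintype.card_fin] at this
    exact this (hle.trans_lt (by omega))
  have hAinj : A.Injective := fun i j hij => by
    by_contra hne
    simpa [Finset.card_pair hne, hij, hA] using hHall {i, j} (by simp)
  obtain ⟨u, hu⟩ : ∃ u, ∀ k, u ∈ A k := by
    by_contra! hcommon
    obtain ⟨l, hl, hcons⟩ := exists_nodup_forall_isConsecutivePair A hA hHall hcommon
    obtain ⟨c, g, hg, hgap⟩ := exists_perm_of_isConsecutivePair hAinj hl hcons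
    exact hham (isHamiltonian_of_leftNbrs_eq_pair h3 hcomp c hg hgap)
  choose w hwu hAw using fun k => Finset.exists_eq_pair_of_mem (hA k) (hu k)
  have hw : w.Injective := fun i j hij => hAinj (by rw [hAw, hAw, hij])
  have hN (j : Fin n) (hj : (j : ℕ) < 3) : leftNbrs H j = {u, w ⟨j, hj⟩} := hAw ⟨j, hj⟩
  refine ⟨⟨u, w, hw, hwu, fun j hj => ?_⟩, nonempty_iso_gnn (by omega) hbip hcomp hw hwu hN⟩
  rw [hbip.neighborSet_inr_eq, hN j hj, Finset.coe_pair, Set.image_pair]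
end
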